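/- arXiv:1411.6310 — 3 statements merged into one kernel-verified Lean document; each statement's English description precedes it below -/
import Mathlib

section
/- Let X and Y be finite linearly ordered sets and ↝ a traversable relation between Y and X, i.e., for all x₁ ≥ x₂ in X and y₁ ≥ y₂ in Y, if y₁ ↝ x₁, y₂ ↝ x₁ and y₂ ↝ x₂, then y₁ ↝ x₂. If g is any ↝-matching (an injective partial function from X to Y with g(x) ↝ x for all x in its domain), then the size of the domain of the best (greedy) ↝-matching f is at least the size of the domain of g. -/
/-- The relation `r` (read `r y x` as `y ↝ x`) is traversable: for `x₂ ≤ x₁` and `y₂ ≤ y₁`,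
if `y₁ ↝ x₁`, `y₂ ↝ x₁` and `y₂ ↝ x₂` then `y₁ ↝ x₂`. -/
def TraversableRel {X Y : Type*} [Preorder X] [Preorder Y] (r : Y → X → Prop) : Prop :=
  ∀ x₁ x₂ : X, ∀ y₁ y₂ : Y, x₂ ≤ x₁ → y₂ ≤ y₁ → r y₁ x₁ → r y₂ x₁ → r y₂ x₂ → r y₁ x₂

/-- `g` is a `↝`-matching: an injective partial function from `X` to `Y` (encoded as
`g : X → Option Y`) with `g x ↝ x` whenever defined. -/
def IsMatchingFn {X Y : Type*} (r : Y → X → Prop) (g : X → Option Y) : Prop :=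
  (∀ x y, g x = some y → r y x) ∧ ∀ x₁ x₂ y, g x₁ = some y → g x₂ = some y → x₁ = x₂

/-- Greedy matching: process the given list of elements of `X` in order, assigning to each
the least still-available `y` with `y ↝ x`, if any. -/
def bestGo {X Y : Type*} [DecidableEq X] [LinearOrder Y] [DecidableEq Y]
    (r : Y → X → Prop) [∀ y x, Decidable (r y x)] :
    List X → Finset Y → X → Option Y
  | [], _, _ => none
  | x :: xs, avail, x' =>
    if h : (avail.filter (fun y => r y x)).Nonempty then
      if x' = x then some ((avail.filter (fun y => r y x)).min' h)
      else bestGo r xs (avail.erase ((avail.filter (fun y => r y x)).min' h)) x'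
    else
      if x' = x then none else bestGo r xs avail x'

/-- The best (greedy) `↝`-matching between `A ⊆ X` and `B ⊆ Y`: go through the elements of
`A` from the largest down, assigning to each the minimal unused `y ∈ B` with `y ↝ x`
when one exists. -/
def bestMatchOn {X Y : Type*} [LinearOrder X] [LinearOrder Y] [Fintype X]
    (r : Y → X → Prop) [∀ y x, Decidable (r y x)] (A : Finset X) (B : Finset Y) :
    X → Option Y :=
  bestGo r ((A.sort (· ≤ ·)).reverse) B

/-- The domain of a partial function `X → Option Y`. -/
def matchDom {X Y : Type*} [Fintype X] (f : X → Option Y) : Finset X :=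
  Finset.univ.filter (fun x => (f x).isSome)

set_option linter.unusedSectionVars false

section Aux
variable {X Y : Type*} [LinearOrder X] [LinearOrder Y] [Fintype X]
variable (r : Y → X → Prop) [∀ y x, Decidable (r y x)]

lemma mem_matchDom {f : X → Option Y} {x : X} : x ∈ matchDom f ↔ (f x).isSome := by
  simp [matchDom]

lemma bestGo_mem : ∀ (xs : List X) (avail : Finset Y) (x : X) (y : Y),
    bestGo r xs avail x = some y → x ∈ xs := by
  intro xs
  induction xs with
  | nil => intro avail x y h; simp [bestGo] at h
  | cons a xs ih =>
    intro avail x y h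
    simp only [bestGo] at h
    split at h
    · split at h
      · next hxa => exact hxa ▸ List.mem_cons_self (a := a) (l := xs)
      · exact List.mem_cons_of_mem _ (ih _ _ _ h)
    · split at h
      · exact absurd h (by simp)
      · exact List.mem_cons_of_mem _ (ih _ _ _ h)

lemma greedy_best (htrav : TraversableRel r) :
    ∀ (xs : List X) (avail : Finset Y), xs.Pairwise (· > ·) →
    ∀ g : X → Option Y, IsMatchingFn r g →
    (∀ x y, g x = some y → x ∈ xs) →
    (∀ x y, g x = some y → y ∈ avail) →
    (matchDom g).card ≤ (matchDom (bestGo r xs avail)).card := by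
  intro xs
  induction xs with
  | nil =>
    intro avail _ g hg hdom _
    have : matchDom g = ∅ := by
      ext x
      simp only [mem_matchDom, Finset.notMem_empty, iff_false, Option.isSome_iff_exists,
        not_exists]
      intro y hy
      exact absurd (hdom x y hy) (List.not_mem_nil (a := x))
    simp [this]
  | cons a xs ih =>
    intro avail hpw g hg hdom hrange
    obtain ⟨hgr, hginj⟩ := hg
    by_cases h : (avail.filter (fun y => r y a)).Nonempty
    · set m := (avail.filter (fun y => r y a)).min' h with hm
      have hmA : m ∈ avail.filter (fun y => r y a) := Finset.min'_mem _ h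
      have hmavail : m ∈ avail := (Finset.mem_filter.mp hmA).1
      have hrma : r m a := (Finset.mem_filter.mp hmA).2
      have hbg : ∀ x', bestGo r (a::xs) avail x' =
          if x' = a then some m else bestGo r xs (avail.erase m) x' := by
        intro x'; simp only [bestGo, dif_pos h]; rfl
      have hnotin : a ∉ xs := fun hx => lt_irrefl a ((List.pairwise_cons.mp hpw).1 a hx)
      have hains : a ∉ matchDom (bestGo r xs (avail.erase m)) := by
        rw [mem_matchDom, Option.isSome_iff_exists]
        rintro ⟨y, hy⟩
        exact hnotin (bestGo_mem r xs _ a y hy)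
      have hdomins : matchDom (bestGo r (a::xs) avail) =
          insert a (matchDom (bestGo r xs (avail.erase m))) := by
        ext x'
        simp only [mem_matchDom, Finset.mem_insert, hbg]
        by_cases hxa : x' = a
        · simp [hxa]
        · simp [hxa]
      classical
      set g' : X → Option Y := fun x' =>
        if x' = a then none else if g x' = some m then g a else g x' with hg'def
      have hmemxs : ∀ x' y', x' ≠ a → g x' = some y' → x' ∈ xs := fun x' y' hne hgx =>
        (List.mem_cons.mp (hdom x' y' hgx)).resolve_left hne
      have hxlt : ∀ x', x' ∈ xs → x' < a := fun x' hx' =>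
        (List.pairwise_cons.mp hpw).1 x' hx'
      have hmle : ∀ y, g a = some y → m ≤ y := by
        intro y hy
        exact Finset.min'_le _ _ (Finset.mem_filter.mpr ⟨hrange a y hy, hgr a y hy⟩)
      -- g' is a matching
      have hg'r : ∀ x' y', g' x' = some y' → r y' x' := by
        intro x' y' hx'
        simp only [hg'def] at hx'
        by_cases h1 : x' = a
        · simp [h1] at hx'
        by_cases h2 : g x' = some m
        · simp only [if_neg h1, if_pos h2] at hx'
          have hx'xs := hmemxs x' m h1 h2
          exact htrav a x' y' m (le_of_lt (hxlt x' hx'xs)) (hmle y' hx')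
            (hgr a y' hx') hrma (hgr x' m h2)
        · simp only [if_neg h1, if_neg h2] at hx'
          exact hgr x' y' hx'
      have hg'inj : ∀ x₁ x₂ y, g' x₁ = some y → g' x₂ = some y → x₁ = x₂ := by
        intro x₁ x₂ y h1 h2
        simp only [hg'def] at h1 h2
        by_cases e1 : x₁ = a
        · simp [e1] at h1
        by_cases e2 : x₂ = a
        · simp [e2] at h2
        simp only [if_neg e1] at h1
        simp only [if_neg e2] at h2
        by_cases m1 : g x₁ = some m <;> by_cases m2 : g x₂ = some m
        · simp only [if_pos m1] at h1; simp only [if_pos m2] at h2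
          exact hginj x₁ x₂ m m1 m2
        · simp only [if_pos m1] at h1; simp only [if_neg m2] at h2
          exact absurd (hginj a x₂ y h1 h2).symm e2
        · simp only [if_neg m1] at h1; simp only [if_pos m2] at h2
          exact absurd (hginj x₁ a y h1 h2) e1
        · simp only [if_neg m1] at h1; simp only [if_neg m2] at h2
          exact hginj x₁ x₂ y h1 h2
      have hg'dom : ∀ x' y', g' x' = some y' → x' ∈ xs := by
        intro x' y' hx'
        simp only [hg'def] at hx'
        by_cases h1 : x' = a
        · simp [h1] at hx'
        by_cases h2 : g x' = some m
        · exact hmemxs x' m h1 h2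
        · simp only [if_neg h1, if_neg h2] at hx'
          exact hmemxs x' y' h1 hx'
      have hg'range : ∀ x' y', g' x' = some y' → y' ∈ avail.erase m := by
        intro x' y' hx'
        simp only [hg'def] at hx'
        by_cases h1 : x' = a
        · simp [h1] at hx'
        by_cases h2 : g x' = some m
        · simp only [if_neg h1, if_pos h2] at hx'
          refine Finset.mem_erase.mpr ⟨?_, hrange a y' hx'⟩
          intro hym
          exact h1 (hginj x' a m h2 (hym ▸ hx'))
        · simp only [if_neg h1, if_neg h2] at hx'
          exact Finset.mem_erase.mpr ⟨fun hym => h2 (hym ▸ hx'), hrange x' y' hx'⟩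
      have hsub : ∃ c, matchDom g ⊆ insert c (matchDom g') := by
        cases hcase : g a with
        | none =>
          by_cases hex : ∃ x₀, g x₀ = some m
          · obtain ⟨x₀, hx₀⟩ := hex
            refine ⟨x₀, fun x' hx' => ?_⟩
            rw [mem_matchDom, Option.isSome_iff_exists] at hx'
            obtain ⟨y', hy'⟩ := hx'
            have h1 : x' ≠ a := fun e => by rw [e, hcase] at hy'; exact absurd hy' (by simp)
            by_cases h2 : g x' = some m
            · exact Finset.mem_insert.mpr (Or.inl (hginj x' x₀ m h2 hx₀))
            · refine Finset.mem_insert.mpr (Or.inr ?_)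
              rw [mem_matchDom]
              have hym : y' ≠ m := fun e => h2 (e ▸ hy')
              simp [hg'def, h1, h2, hy', hym]
          · refine ⟨a, fun x' hx' => ?_⟩
            rw [mem_matchDom, Option.isSome_iff_exists] at hx'
            obtain ⟨y', hy'⟩ := hx'
            have h1 : x' ≠ a := fun e => by rw [e, hcase] at hy'; exact absurd hy' (by simp)
            have h2 : g x' ≠ some m := fun hh => hex ⟨x', hh⟩
            refine Finset.mem_insert.mpr (Or.inr ?_)
            rw [mem_matchDom]
            have hym : y' ≠ m := fun e => h2 (e ▸ hy')
            simp [hg'def, h1, h2, hy', hym]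
        | some y =>
          refine ⟨a, fun x' hx' => ?_⟩
          rw [mem_matchDom, Option.isSome_iff_exists] at hx'
          obtain ⟨y', hy'⟩ := hx'
          by_cases h1 : x' = a
          · exact Finset.mem_insert.mpr (Or.inl h1)
          refine Finset.mem_insert.mpr (Or.inr ?_)
          rw [mem_matchDom]
          by_cases h2 : g x' = some m
          · simp [hg'def, h1, h2, hcase]
          · have hym : y' ≠ m := fun e => h2 (e ▸ hy')
            simp [hg'def, h1, h2, hy', hym]
      obtain ⟨c, hsub⟩ := hsub
      calc (matchDom g).card ≤ (insert c (matchDom g')).card := Finset.card_le_card hsub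
        _ ≤ (matchDom g').card + 1 := Finset.card_insert_le _ _
        _ ≤ (matchDom (bestGo r xs (avail.erase m))).card + 1 := by
            have := ih (avail.erase m) (List.pairwise_cons.mp hpw).2
              g' ⟨hg'r, hg'inj⟩ hg'dom hg'range
            omega
        _ = (matchDom (bestGo r (a::xs) avail)).card := by
            rw [hdomins, Finset.card_insert_of_notMem hains]
    · have hga : g a = none := by
        cases hcase : g a with
        | none => rfl
        | some y =>
          exact absurd ⟨y, Finset.mem_filter.mpr ⟨hrange a y hcase, hgr a y hcase⟩⟩ h
      have hnotin : a ∉ xs := fun hx => lt_irrefl a ((List.pairwise_cons.mp hpw).1 a hx)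
      have heq : matchDom (bestGo r (a::xs) avail) = matchDom (bestGo r xs avail) := by
        ext x'
        simp only [mem_matchDom]
        simp only [bestGo, dif_neg h]
        by_cases hxa : x' = a
        · subst hxa
          simp only [if_pos rfl]
          constructor
          · intro hh; exact absurd hh (by simp)
          · intro hh
            obtain ⟨y, hy⟩ := Option.isSome_iff_exists.mp hh
            exact absurd (bestGo_mem r xs avail x' y hy) hnotin
        · simp [hxa]
      rw [heq]
      refine ih avail (List.pairwise_cons.mp hpw).2 g ⟨hgr, hginj⟩ ?_ hrange
      intro x y hx
      rcases List.mem_cons.mp (hdom x y hx) with h1 | h1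
      · rw [h1, hga] at hx; exact absurd hx (by simp)
      · exact h1

end Aux

/-- The best (greedy) matching has a domain at least as large as that of any matching. -/
theorem best_matching_is_best {X Y : Type*} [LinearOrder X] [LinearOrder Y]
    [Fintype X] [Fintype Y]
    (r : Y → X → Prop) [∀ y x, Decidable (r y x)] (htrav : TraversableRel r)
    (g : X → Option Y) (hg : IsMatchingFn r g) :
    (matchDom g).card ≤ (matchDom (bestMatchOn r Finset.univ Finset.univ)).card := by
  unfold bestMatchOn
  refine greedy_best r htrav _ Finset.univ ?_ g hg (fun x y _ => ?_) (fun x y _ => Finset.mem_univ y)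
  · rw [List.pairwise_reverse]
    exact (Finset.sortedLT_sort _).pairwise.imp (fun h => h)
  · rw [List.mem_reverse, Finset.mem_sort]
    exact Finset.mem_univ x
end

section
/- Let X and Y be finite linearly ordered sets, ↝ a traversable relation between Y and X, and f the best ↝-matching between X and Y. The following are equivalent: (1) there exists a ↝-matching function from all of X into Y; (2) Hall's criterion holds: for every A ⊆ X, #{y ∈ Y : ∃ x ∈ A, y ↝ x} ≥ #A; (3) the domain of the best ↝-matching f is all of X. -/
section
variable {X Y : Type*} [LinearOrder X] [LinearOrder Y]
  (r : Y → X → Prop) [∀ y x, Decidable (r y x)]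

lemma bestGo_sound : ∀ (L : List X) (avail : Finset Y) (x : X) (y : Y),
    bestGo r L avail x = some y → y ∈ avail ∧ r y x := by
  intro L
  induction L with
  | nil => intro avail x y h; simp [bestGo] at h
  | cons a xs ih =>
    intro avail x y h
    rw [bestGo] at h
    split at h
    · next hne =>
      split at h
      · next hx =>
        subst hx
        cases h
        have := Finset.min'_mem _ hne
        rw [Finset.mem_filter] at this
        exact ⟨this.1, this.2⟩
      · obtain ⟨h1, h2⟩ := ih _ _ _ h
        exact ⟨Finset.mem_of_mem_erase h1, h2⟩
    · split at h
      · exact absurd h (by simp)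
      · exact ih _ _ _ h

lemma bestGo_inj : ∀ (L : List X) (avail : Finset Y) (x₁ x₂ : X) (y : Y),
    bestGo r L avail x₁ = some y → bestGo r L avail x₂ = some y → x₁ = x₂ := by
  intro L
  induction L with
  | nil => intro avail x₁ x₂ y h; simp [bestGo] at h
  | cons a xs ih =>
    intro avail x₁ x₂ y h1 h2
    rw [bestGo] at h1 h2
    split at h1
    · next hne =>
      rw [dif_pos hne] at h2
      split at h1 <;> split at h2
      · next e1 e2 => rw [e1, e2]
      · next e1 =>
        cases h1
        have := (bestGo_sound r _ _ _ _ h2).1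
        exact absurd rfl (Finset.ne_of_mem_erase this)
      · next e2 =>
        cases h2
        have := (bestGo_sound r _ _ _ _ h1).1
        exact absurd rfl (Finset.ne_of_mem_erase this)
      · exact ih _ _ _ _ h1 h2
    · next hne =>
      rw [dif_neg hne] at h2
      split at h1
      · exact absurd h1 (by simp)
      · split at h2
        · exact absurd h2 (by simp)
        · exact ih _ _ _ _ h1 h2

lemma bestGo_complete (htrav : TraversableRel r) :
    ∀ (L : List X) (avail : Finset Y) (g : X → Y),
      L.Pairwise (fun a b => b ≤ a) → L.Nodup →
      (∀ x ∈ L, g x ∈ avail ∧ r (g x) x) →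
      (∀ x₁ ∈ L, ∀ x₂ ∈ L, g x₁ = g x₂ → x₁ = x₂) →
      ∀ x ∈ L, (bestGo r L avail x).isSome := by
  intro L
  induction L with
  | nil => intro _ _ _ _ _ _ x hx; simp at hx
  | cons a xs ih =>
    intro avail g hsort hnd hg hinj x hx
    have hga := hg a (by simp)
    have hne : (avail.filter (fun y => r y a)).Nonempty :=
      ⟨g a, Finset.mem_filter.2 ⟨hga.1, hga.2⟩⟩
    set y₀ := (avail.filter (fun y => r y a)).min' hne with hy₀
    have hy₀mem := Finset.min'_mem _ hne
    rw [Finset.mem_filter] at hy₀mem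
    rw [bestGo, dif_pos hne]
    by_cases hxa : x = a
    · simp [hxa]
    · rw [if_neg hxa]
      have hxs : x ∈ xs := by
        rcases List.mem_cons.1 hx with h | h
        · exact absurd h hxa
        · exact h
      have hanotin : a ∉ xs := (List.nodup_cons.1 hnd).1
      set g' : X → Y := fun z => if g z = y₀ then g a else g z with hg'
      refine ih (avail.erase y₀) g' hsort.of_cons (List.nodup_cons.1 hnd).2 ?_ ?_ x hxs
      · intro z hz
        have hza : z ≠ a := fun h => hanotin (h ▸ hz)
        have hgz := hg z (List.mem_cons_of_mem _ hz)
        have hzlea : z ≤ a := List.rel_of_pairwise_cons hsort hz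
        by_cases hc : g z = y₀
        · have hgane : g a ≠ y₀ := by
            intro h
            exact hza (hinj z (List.mem_cons_of_mem _ hz) a (by simp) (hc.trans h.symm))
          have hy₀le : y₀ ≤ g a := Finset.min'_le _ _ (Finset.mem_filter.2 ⟨hga.1, hga.2⟩)
          have : r (g a) z := htrav a z (g a) y₀ hzlea hy₀le hga.2 hy₀mem.2 (hc ▸ hgz.2)
          simp only [hg', if_pos hc]
          exact ⟨Finset.mem_erase.2 ⟨hgane, hga.1⟩, this⟩
        · simp only [hg', if_neg hc]
          exact ⟨Finset.mem_erase.2 ⟨hc, hgz.1⟩, hgz.2⟩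
      · intro z₁ hz₁ z₂ hz₂ heq
        simp only [hg'] at heq
        have hm₁ := List.mem_cons_of_mem a hz₁
        have hm₂ := List.mem_cons_of_mem a hz₂
        split at heq <;> split at heq
        · next e1 e2 => exact hinj z₁ hm₁ z₂ hm₂ (e1.trans e2.symm)
        · next e1 e2 =>
          exact absurd (hinj a (by simp) z₂ hm₂ heq).symm (fun h => hanotin (h ▸ hz₂))
        · next e1 e2 =>
          exact absurd (hinj z₁ hm₁ a (by simp) heq) (fun h => hanotin (h ▸ hz₁))
        · exact hinj z₁ hm₁ z₂ hm₂ heq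

end

/-- For a traversable relation, the following are equivalent: existence of a matching
function on all of `X`; Hall's criterion; and the best (greedy) matching being a total
function on `X`. -/
theorem matching_tfae {X Y : Type*} [LinearOrder X] [LinearOrder Y]
    [Fintype X] [Fintype Y]
    (r : Y → X → Prop) [∀ y x, Decidable (r y x)] (htrav : TraversableRel r) :
    ((∃ f : X → Y, Function.Injective f ∧ ∀ x, r (f x) x) ↔
        ∀ A : Finset X, A.card ≤ (Finset.univ.filter (fun y => ∃ x ∈ A, r y x)).card) ∧
    ((∀ A : Finset X, A.card ≤ (Finset.univ.filter (fun y => ∃ x ∈ A, r y x)).card) ↔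
        ∀ x, (bestMatchOn r Finset.univ Finset.univ x).isSome) := by
  classical
  have h1 : (∃ f : X → Y, Function.Injective f ∧ ∀ x, r (f x) x) ↔
      ∀ A : Finset X, A.card ≤ (Finset.univ.filter (fun y => ∃ x ∈ A, r y x)).card :=
    (Fintype.all_card_le_filter_rel_iff_exists_injective (fun x y => r y x)).symm
  refine ⟨h1, ?_, fun htot => h1.mp ?_⟩
  · intro hall
    obtain ⟨f, hfinj, hfr⟩ := h1.mpr hall
    intro x
    have hsorted : ((Finset.univ : Finset X).sort (· ≤ ·)).reverse.Pairwise
        (fun a b => b ≤ a) := by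
      exact List.pairwise_reverse.2 (Finset.pairwise_sort _ _)
    have hnd : ((Finset.univ : Finset X).sort (· ≤ ·)).reverse.Nodup :=
      List.nodup_reverse.2 (Finset.sort_nodup _ _)
    have hmem : x ∈ ((Finset.univ : Finset X).sort (· ≤ ·)).reverse := by
      rw [List.mem_reverse, Finset.mem_sort]; exact Finset.mem_univ x
    exact bestGo_complete r htrav _ Finset.univ f hsorted hnd
      (fun z _ => ⟨Finset.mem_univ _, hfr z⟩)
      (fun z₁ _ z₂ _ h => hfinj h) x hmem
  · refine ⟨fun x => (bestMatchOn r Finset.univ Finset.univ x).get (htot x), ?_, ?_⟩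
    · intro x₁ x₂ h
      have e1 : bestMatchOn r Finset.univ Finset.univ x₁ =
          some ((bestMatchOn r Finset.univ Finset.univ x₂).get (htot x₂)) := by
        simp only at h; rw [← h]; exact (Option.some_get (htot x₁)).symm
      have e2 : bestMatchOn r Finset.univ Finset.univ x₂ =
          some ((bestMatchOn r Finset.univ Finset.univ x₂).get (htot x₂)) :=
        (Option.some_get (htot x₂)).symm
      exact bestGo_inj r _ _ x₁ x₂ _ e1 e2
    · intro x
      exact (bestGo_sound r _ _ x _ (Option.some_get (htot x)).symm).2
end

section
/- Let X and Y be finite linearly ordered sets, ↝ a traversable relation between Y and X, and f the best ↝-matching between X and Y. Suppose A ⊆ X and B ⊆ Y are such that for any x ∈ X and y ∈ Y with y ↝ x one has x ∈ A and y ∈ B. Then the domain of f is contained in A, the range of f is contained in B, and f coincides with the best matching between A and B (with the induced orders). -/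
lemma bestGo_some_rel {X Y : Type*} [DecidableEq X] [LinearOrder Y]
    (r : Y → X → Prop) [∀ y x, Decidable (r y x)] :
    ∀ (l : List X) (avail : Finset Y) (x' : X) (y : Y),
      bestGo r l avail x' = some y → r y x'
  | [], _, _, _, h => by simp [bestGo] at h
  | x :: xs, avail, x', y, h => by
    rw [bestGo] at h
    split_ifs at h with h1 h2 h3
    · obtain rfl := Option.some.inj h
      have := Finset.min'_mem _ h1
      subst h2
      exact (Finset.mem_filter.mp this).2
    · exact bestGo_some_rel r xs _ x' y h
    · exact bestGo_some_rel r xs _ x' y h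

lemma bestGo_inter {X Y : Type*} [DecidableEq X] [LinearOrder Y]
    (r : Y → X → Prop) [∀ y x, Decidable (r y x)] (B : Finset Y)
    (hB : ∀ x y, r y x → y ∈ B) :
    ∀ (l : List X) (avail : Finset Y) (x' : X),
      bestGo r l avail x' = bestGo r l (avail ∩ B) x'
  | [], _, _ => rfl
  | x :: xs, avail, x' => by
    have key : (avail ∩ B).filter (fun y => r y x) = avail.filter (fun y => r y x) := by
      ext y
      simp only [Finset.mem_filter, Finset.mem_inter]
      exact ⟨fun ⟨⟨h1, _⟩, h2⟩ => ⟨h1, h2⟩, fun ⟨h1, h2⟩ => ⟨⟨h1, hB x y h2⟩, h2⟩⟩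
    rw [bestGo, bestGo, key]
    split_ifs with h1 h2
    · rfl
    · rw [← Finset.erase_inter]
      exact bestGo_inter r B hB xs _ x'
    · rfl
    · exact bestGo_inter r B hB xs _ x'

lemma bestGo_filter {X Y : Type*} [DecidableEq X] [LinearOrder Y]
    (r : Y → X → Prop) [∀ y x, Decidable (r y x)] (p : X → Prop) [DecidablePred p]
    (hp : ∀ x y, r y x → p x) :
    ∀ (l : List X) (avail : Finset Y) (x' : X),
      bestGo r l avail x' = bestGo r (l.filter (fun x => p x)) avail x'
  | [], _, _ => rfl
  | x :: xs, avail, x' => by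
    by_cases hx : p x
    · rw [List.filter_cons_of_pos (by simpa using hx), bestGo, bestGo]
      split_ifs with h1 h2
      · rfl
      · exact bestGo_filter r p hp xs _ x'
      · rfl
      · exact bestGo_filter r p hp xs _ x'
    · have hempty : ¬ (avail.filter (fun y => r y x)).Nonempty := by
        rintro ⟨y, hy⟩
        exact hx (hp x y (Finset.mem_filter.mp hy).2)
      rw [List.filter_cons_of_neg (by simpa using hx), bestGo, dif_neg hempty]
      split_ifs with h2
      · cases hgo : bestGo r (xs.filter (fun x => p x)) avail x' with
        | none => rfl
        | some y =>
          exact absurd (h2 ▸ hp x' y (bestGo_some_rel r _ _ _ _ hgo)) hx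
      · exact bestGo_filter r p hp xs _ x'

/-- If every related pair `(y, x)` (with `y ↝ x`) satisfies `x ∈ A` and `y ∈ B`, then the
best matching between `X` and `Y` has domain contained in `A`, range contained in `B`, and
coincides with the best matching between `A` and `B`. -/
theorem best_matching_restrict {X Y : Type*} [LinearOrder X] [LinearOrder Y]
    [Fintype X] [Fintype Y]
    (r : Y → X → Prop) [∀ y x, Decidable (r y x)] (htrav : TraversableRel r)
    (A : Finset X) (B : Finset Y) (hAB : ∀ x y, r y x → x ∈ A ∧ y ∈ B) :
    (∀ x, (bestMatchOn r Finset.univ Finset.univ x).isSome → x ∈ A) ∧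
    (∀ x y, bestMatchOn r Finset.univ Finset.univ x = some y → y ∈ B) ∧
    bestMatchOn r Finset.univ Finset.univ = bestMatchOn r A B := by
  refine ⟨?_, ?_, ?_⟩
  · intro x hx
    obtain ⟨y, hy⟩ := Option.isSome_iff_exists.mp hx
    exact (hAB x y (bestGo_some_rel r _ _ _ _ hy)).1
  · intro x y hy
    exact (hAB x y (bestGo_some_rel r _ _ _ _ hy)).2
  · funext x
    unfold bestMatchOn
    rw [bestGo_inter r B (fun x y h => (hAB x y h).2), Finset.univ_inter,
      bestGo_filter r (fun x => x ∈ A) (fun x y h => (hAB x y h).1)]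
    congr 1
    rw [List.filter_reverse]
    congr 1
    apply fun hp h1 h2 => List.Perm.eq_of_pairwise' (r := (· ≤ · : X → X → Prop)) h1 h2 hp
    · apply List.perm_of_nodup_nodup_toFinset_eq
      · exact (Finset.sort_nodup _ _).filter _
      · exact Finset.sort_nodup _ _
      · ext a
        simp [List.mem_filter]
    · exact (Finset.pairwise_sort _ _).filter _
    · exact Finset.pairwise_sort _ _
end
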